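/- Let m ≥ 2, let μ₀ ∈ ℝ^m lie in the probability simplex Δ_m with every entry strictly positive, and let c ∈ ℝ^m satisfy c_1 > c_2 ≥ c_3 ≥ … ≥ c_m; set D_2 = c_1 - c_2 > 0. Let t ≥ 0 be a real number, let ε > 0, and let φ ∈ ℝ^m satisfy |φ(j) - c_j| ≤ ε for every j. Define the Gibbs distribution μ(j) = μ₀_j · exp(t·φ(j)) / (Σ_{j'=1}^m μ₀_{j'} · exp(t·φ(j'))). Then |μ(1) - 1| ≤ (m-1) · (max_{1≤k≤m} μ₀_k / μ₀_1) · exp((-D_2 + 2ε)·t). -/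

import Mathlib

/-! Write `w j = μ₀_j exp(t φ(j))`, so that `μ(1) = w₁ / ∑ w`. Then `1 - μ(1)` is the mass
`∑_{j ≠ 1} w_j / ∑ w ≤ ∑_{j ≠ 1} w_j / w₁`, and each ratio `w_j / w₁` is at most
`(max μ₀ / μ₀_1) exp((-D₂ + 2ε) t)`, because for `j ≠ 1`
`φ(j) - φ(1) ≤ c_j - c_1 + 2ε ≤ -D₂ + 2ε`. -/

open Finset

theorem abs_div_sum_sub_one_le_of_le_mul {ι : Type*} [Fintype ι] [DecidableEq ι]
    (w : ι → ℝ) (hw : ∀ j, 0 ≤ w j) (i : ι) (hi : 0 < w i) (K : ℝ)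
    (hK : ∀ j ≠ i, w j ≤ K * w i) :
    |w i / ∑ j, w j - 1| ≤ (Fintype.card ι - 1) * K := by
  set S := ∑ j ∈ univ.erase i, w j
  have hsum : ∑ j, w j = w i + S := (add_sum_erase _ _ (mem_univ i)).symm
  have hS : 0 ≤ S := sum_nonneg fun j _ => hw j
  have hSle : S ≤ (Fintype.card ι - 1) * (K * w i) := by
    have := sum_le_card_nsmul (univ.erase i) w (K * w i)
      fun j hj => hK j (ne_of_mem_erase hj)
    rwa [nsmul_eq_mul, cast_card_erase_of_mem (mem_univ i), card_univ] at this
  calc |w i / ∑ j, w j - 1| = S / (w i + S) := by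
        rw [hsum, abs_sub_comm, abs_of_nonneg] <;> field_simp <;> linarith
    _ ≤ S / w i := div_le_div_of_nonneg_left hS hi (by linarith)
    _ ≤ (Fintype.card ι - 1) * K := by
      rw [div_le_iff₀ hi, mul_assoc]; exact hSle

theorem mul_exp_mul_le_of_sub_le {a b M t x y δ : ℝ} (ha : 0 ≤ a) (haM : a ≤ M) (hb : 0 < b)
    (ht : 0 ≤ t) (hxy : x - y ≤ δ) :
    a * Real.exp (t * x) ≤ M / b * Real.exp (δ * t) * (b * Real.exp (t * y)) := by
  have hexp : t * x ≤ δ * t + t * y := by nlinarith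
  calc a * Real.exp (t * x) ≤ M * Real.exp (δ * t + t * y) :=
        mul_le_mul haM (Real.exp_le_exp.mpr hexp) (Real.exp_pos _).le (ha.trans haM)
    _ = M / b * Real.exp (δ * t) * (b * Real.exp (t * y)) := by
        rw [Real.exp_add]; field_simp

-- State `j` of the paper is the index `⟨j - 1, _⟩ : Fin m`.
/-- Suppose `c_1 > c_2 ≥ … ≥ c_m`, `D_2 = c_1 - c_2 > 0`, and
`|φ(j) - c_j| ≤ ε` for every `j`. Then the Gibbs distribution
`μ(j) = μ₀_j exp(t φ(j)) / ∑_{j'} μ₀_{j'} exp(t φ(j'))` satisfies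
`|μ(1) - 1| ≤ (m-1) (max_k μ₀_k / μ₀_1) exp((-D_2 + 2ε) t)`
(state `j` is represented by the index `⟨j-1, _⟩ : Fin m`). -/
theorem gibbs_learning_rate_bound
    (m : ℕ) (hm : 2 ≤ m) (μ0 : Fin m → ℝ)
    (hμ0pos : ∀ j, 0 < μ0 j)
    (c : Fin m → ℝ)
    (hcmono : ∀ j j' : Fin m, j ≠ ⟨0, by omega⟩ → j ≤ j' → c j' ≤ c j)
    (D2 : ℝ) (hD2 : D2 = c ⟨0, by omega⟩ - c ⟨1, by omega⟩)
    (t : ℝ) (ht : 0 ≤ t) (ε : ℝ)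
    (φ : Fin m → ℝ) (hφ : ∀ j, |φ j - c j| ≤ ε)
    (μ : Fin m → ℝ)
    (hμ : ∀ j, μ j = μ0 j * Real.exp (t * φ j) /
      ∑ j', μ0 j' * Real.exp (t * φ j')) :
    |μ ⟨0, by omega⟩ - 1| ≤
      ((m : ℝ) - 1) *
        ((Finset.univ.sup' (Finset.univ_nonempty_iff.mpr ⟨⟨0, by omega⟩⟩) μ0) /
          μ0 ⟨0, by omega⟩) *
        Real.exp ((-D2 + 2 * ε) * t) := by
  set i0 : Fin m := ⟨0, by omega⟩
  set i1 : Fin m := ⟨1, by omega⟩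
  have hc_le : ∀ j ≠ i0, c j ≤ c i1 := fun j hj =>
    hcmono i1 j (by simp [i0, i1, Fin.ext_iff])
      (Fin.mk_le_of_le_val (Nat.one_le_iff_ne_zero.mpr (Fin.val_ne_of_ne hj)))
  have key := abs_div_sum_sub_one_le_of_le_mul (fun j => μ0 j * Real.exp (t * φ j))
    (fun j => (mul_pos (hμ0pos j) (Real.exp_pos _)).le) i0
    (mul_pos (hμ0pos i0) (Real.exp_pos _))
    (univ.sup' (univ_nonempty_iff.mpr ⟨i0⟩) μ0 / μ0 i0 * Real.exp ((-D2 + 2 * ε) * t))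
    fun j hj => by
      refine mul_exp_mul_le_of_sub_le (hμ0pos j).le (le_sup' μ0 (mem_univ j)) (hμ0pos i0) ht ?_
      linarith [(abs_le.mp (hφ j)).2, (abs_le.mp (hφ i0)).1, hc_le j hj]
  rw [Fintype.card_fin] at key
  rw [hμ i0, mul_assoc]
  exact key
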